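/- For every real number φ with 1 < φ < 3/2 and every γ ≥ 0, the quantity G(β, γ, φ, n) := g(β, n)·M(γ, φ, n) + W(γ, φ, n) satisfies: for β = 1, G = Θ(n^{3/2}/√(log n)) if γ > 5/2−φ; Θ(n^{3/2}·√(log n)) if γ = 5/2−φ; Θ(n^{4−γ−φ}) if 1 < γ < 5/2−φ; Θ(n^{3−φ}/log n) if γ = 1; and Θ(n^{3−φ}) if 0 ≤ γ < 1; for 0 ≤ β < 1, G = Θ(n^{3/2}) if γ > 5/2−φ; Θ(n^{3/2}·log n) if γ = 5/2−φ; Θ(n^{4−γ−φ}) if 1 < γ < 5/2−φ; Θ(n^{3−φ}/log n) if γ = 1; and Θ(n^{3−φ}) if 0 ≤ γ < 1. -/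

import Mathlib

/-- `f(n) = Θ(h(n))`: there exist constants `0 < c₁ ≤ c₂` and `N₀` such that
`c₁·h(n) ≤ f(n) ≤ c₂·h(n)` for all integers `n ≥ N₀`. -/
def IsBigTheta (f h : ℕ → ℝ) : Prop :=
  ∃ c₁ c₂ : ℝ, 0 < c₁ ∧ c₁ ≤ c₂ ∧ ∃ N₀ : ℕ, ∀ n : ℕ, N₀ ≤ n →
    c₁ * h n ≤ f n ∧ f n ≤ c₂ * h n

/-- Zipf normalization `Z(γ, n) = Σ_{j=1}^{n−1} j^{−γ}`. -/
noncomputable def Z (γ : ℝ) (n : ℕ) : ℝ := ∑ j ∈ Finset.Icc 1 (n - 1), (j : ℝ) ^ (-γ)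

/-- `Z_φ(l) = Σ_{m=1}^{l} m^{−φ}`. -/
noncomputable def Zphi (φ : ℝ) (l : ℕ) : ℝ := ∑ m ∈ Finset.Icc 1 l, (m : ℝ) ^ (-φ)

/-- `D₁(φ, l) = Z_φ(l)⁻¹·Σ_{d=1}^{l} d^{1−φ}`. -/
noncomputable def D1 (φ : ℝ) (l : ℕ) : ℝ :=
  (Zphi φ l)⁻¹ * ∑ d ∈ Finset.Icc 1 l, (d : ℝ) ^ (1 - φ)

/-- `D_{1/2}(φ, l) = Z_φ(l)⁻¹·Σ_{d=1}^{l} d^{1/2−φ}`. -/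
noncomputable def Dhalf (φ : ℝ) (l : ℕ) : ℝ :=
  (Zphi φ l)⁻¹ * ∑ d ∈ Finset.Icc 1 l, (d : ℝ) ^ (1 / 2 - φ)

/-- `W(γ, φ, n) = n·Z(γ, n)⁻¹·Σ_{l=1}^{n−1} l^{−γ}·D₁(φ, l)`. -/
noncomputable def W (γ φ : ℝ) (n : ℕ) : ℝ :=
  n * (Z γ n)⁻¹ * ∑ l ∈ Finset.Icc 1 (n - 1), (l : ℝ) ^ (-γ) * D1 φ l

/-- `M(γ, φ, n) = n·Z(γ, n)⁻¹·Σ_{l=1}^{n−1} l^{−γ}·D_{1/2}(φ, l)`. -/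
noncomputable def M (γ φ : ℝ) (n : ℕ) : ℝ :=
  n * (Z γ n)⁻¹ * ∑ l ∈ Finset.Icc 1 (n - 1), (l : ℝ) ^ (-γ) * Dhalf φ l

/-- `g(β, n)`: `1` if `β > 2`; `log n` if `β = 2`; `n^{1−β/2}` if `1 < β < 2`;
`√(n/log n)` if `β = 1`; `√n` if `0 ≤ β < 1`. -/
noncomputable def g (β : ℝ) (n : ℕ) : ℝ :=
  if 2 < β then 1
  else if β = 2 then Real.log n
  else if 1 < β then (n : ℝ) ^ (1 - β / 2)
  else if β = 1 then Real.sqrt ((n : ℝ) / Real.log n)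
  else Real.sqrt n

/-- `G(β, γ, φ, n) = g(β, n)·M(γ, φ, n) + W(γ, φ, n)`, the deterministic core of the
transport-complexity lower bound for social-multicast. -/
noncomputable def G (β γ φ : ℝ) (n : ℕ) : ℝ := g β n * M γ φ n + W γ φ n


/-!
Everything is controlled by the power sums `S_p(l) = Σ_{d ≤ l} d ^ p`, which are `Θ(l ^ (p + 1))`
for `p > -1` (comparison with `∫ x ^ p`), `Θ(log l)` for `p = -1` (harmonic numbers) and `Θ(1)`
for `p < -1` (convergent `p`-series). As `1 < φ < 3/2`, `Z_φ(l) = Θ(1)` and, uniformly in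
`l ≥ 1`, `D₁(φ, l) = Θ(l ^ (2 - φ))` and `D_{1/2}(φ, l) = Θ(l ^ (3/2 - φ))`, hence
`W = Θ(n S_{2-φ-γ}(n) / Z(γ, n))` and `M = Θ(n S_{3/2-φ-γ}(n) / Z(γ, n))`.

Below the critical exponent `γ = 5/2 - φ` both power sums grow polynomially, so `√n M = Θ(W)`
and, since `g ≤ √n`, the term `W` dominates `G`. From the critical exponent on, `M = Θ(n log n)`
resp. `Θ(n)` while `W = O(n ^ (3/2))` resp. `O(n ^ (3/2 - δ))`, so `g M` dominates, even for
`β = 1` where `g = √(n / log n)` loses a factor `√(log n)`.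
-/

open Real Finset Filter Asymptotics

lemma isTheta_of_bounds {α : Type*} {l : Filter α} {f g : α → ℝ} {c C : ℝ} (hc : 0 < c)
    (hg : ∀ᶠ x in l, 0 ≤ g x) (h : ∀ᶠ x in l, c * g x ≤ f x ∧ f x ≤ C * g x) :
    f =Θ[l] g := by
  refine ⟨.of_bound C ?_, .of_bound c⁻¹ ?_⟩ <;>
    filter_upwards [hg, h] with x hgx ⟨hlo, hhi⟩ <;>
    rw [norm_of_nonneg hgx, norm_of_nonneg ((mul_nonneg hc.le hgx).trans hlo)]
  · exact hhi
  · rwa [← div_eq_inv_mul, le_div_iff₀' hc]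

lemma isTheta_add_of_isBigO {α : Type*} {l : Filter α} {u v : α → ℝ}
    (hu : ∀ᶠ x in l, 0 ≤ u x) (hv : ∀ᶠ x in l, 0 ≤ v x) (h : v =O[l] u) :
    (fun x => u x + v x) =Θ[l] u :=
  ⟨(isBigO_refl u l).add h, .of_bound 1 <| by
    filter_upwards [hu, hv] with x hux hvx
    rw [norm_of_nonneg hux, norm_of_nonneg (add_nonneg hux hvx)]; linarith⟩

lemma isBigTheta_of_isTheta {f h : ℕ → ℝ} (hf : ∀ n, 0 ≤ f n) (hh : ∀ n, 0 ≤ h n)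
    (hfh : f =Θ[atTop] h) : IsBigTheta f h := by
  obtain ⟨C, -, hC⟩ := hfh.1.exists_pos
  obtain ⟨c, hc, hc'⟩ := hfh.2.exists_pos
  obtain ⟨N, hN⟩ := eventually_atTop.1 (hC.bound.and hc'.bound)
  refine ⟨c⁻¹, max C c⁻¹, inv_pos.2 hc, le_max_right _ _, N, fun n hn => ?_⟩
  obtain ⟨hup, hlow⟩ := hN n hn
  rw [norm_of_nonneg (hf n), norm_of_nonneg (hh n)] at hup hlow
  exact ⟨by rwa [← div_eq_inv_mul, div_le_iff₀' hc],
    hup.trans (mul_le_mul_of_nonneg_right (le_max_left _ _) (hh n))⟩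

lemma Asymptotics.IsTheta.comp_sub_one {f g : ℕ → ℝ} (h : f =Θ[𝓟 (Set.Ici 1)] g) :
    (fun n => f (n - 1)) =Θ[atTop] fun n => g (n - 1) :=
  have h' := h.mono (le_principal_iff.2 (Ici_mem_atTop 1))
  ⟨h'.1.comp_tendsto (tendsto_sub_atTop_nat 1), h'.2.comp_tendsto (tendsto_sub_atTop_nat 1)⟩

lemma isBigO_sum_Icc {u v : ℕ → ℝ} (hv : ∀ l, 0 ≤ v l) (h : u =O[𝓟 (Set.Ici 1)] v) :
    (fun m => ∑ l ∈ Icc 1 m, u l) =O[⊤] fun m => ∑ l ∈ Icc 1 m, v l := by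
  obtain ⟨C, hC⟩ := isBigO_principal.1 h
  refine isBigO_top.2 ⟨C, fun m => ?_⟩
  rw [norm_of_nonneg (sum_nonneg fun l _ => hv l), mul_sum]
  refine (norm_sum_le _ _).trans (sum_le_sum fun l hl => ?_)
  simpa only [norm_of_nonneg (hv l)] using hC l (mem_Icc.1 hl).1

lemma isTheta_sum_Icc {u v : ℕ → ℝ} (hu : ∀ l, 0 ≤ u l) (hv : ∀ l, 0 ≤ v l)
    (h : u =Θ[𝓟 (Set.Ici 1)] v) :
    (fun m => ∑ l ∈ Icc 1 m, u l) =Θ[⊤] fun m => ∑ l ∈ Icc 1 m, v l :=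
  ⟨isBigO_sum_Icc hv h.1, isBigO_sum_Icc hu h.2⟩

lemma natCast_sub_one_isTheta : (fun n : ℕ => ((n - 1 : ℕ) : ℝ)) =Θ[atTop] fun n => (n : ℝ) :=
  isTheta_of_bounds (c := 1 / 2) (C := 1) (by norm_num) (.of_forall fun _ => by positivity)
    ((eventually_ge_atTop 2).mono fun n hn => by
      have : (2 : ℝ) ≤ n := by exact_mod_cast hn
      rw [Nat.cast_sub (by omega)]; constructor <;> linarith)

lemma one_le_log_natCast {n : ℕ} (hn : 3 ≤ n) : 1 ≤ log n := by
  rw [le_log_iff_exp_le (by positivity)]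
  have : (3 : ℝ) ≤ n := by exact_mod_cast hn
  linarith [exp_one_lt_d9]

lemma sqrt_div_log_le_sqrt {n : ℕ} (hn : 3 ≤ n) : √(n / log n) ≤ √n :=
  sqrt_le_sqrt (div_le_self (by positivity) (one_le_log_natCast hn))

lemma sqrt_le_sqrt_div_log_mul_log {n : ℕ} (hn : 3 ≤ n) : √n ≤ √(n / log n) * log n := by
  have hlog := one_le_log_natCast hn
  rw [sqrt_div' _ (by linarith), div_mul_eq_mul_div, mul_div_assoc, div_sqrt]
  exact le_mul_of_one_le_right (sqrt_nonneg _) (one_le_sqrt.2 hlog)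

lemma rpow_isBigO_sqrt_div_log {r : ℝ} (hr : r < 1 / 2) :
    (fun n : ℕ => (n : ℝ) ^ r) =O[atTop] fun n => √(n / log n) := by
  set ε := 1 - 2 * r
  have hε : 0 < ε := by linarith
  refine .of_bound (√ε)⁻¹ ((eventually_ge_atTop 2).mono fun n hn => ?_)
  have hn1 : (1 : ℝ) < n := by exact_mod_cast hn
  have hx : (0 : ℝ) < n := by linarith
  have hlog : 0 < log n := log_pos hn1
  have key : ε * (n : ℝ) ^ (2 * r) ≤ n / log n := by
    rw [le_div_iff₀ hlog]
    calc ε * (n : ℝ) ^ (2 * r) * log n ≤ ε * (n : ℝ) ^ (2 * r) * ((n : ℝ) ^ ε / ε) :=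
          mul_le_mul_of_nonneg_left (log_le_rpow_div hx.le hε) (by positivity)
      _ = n := by rw [mul_comm ε, mul_assoc, mul_div_cancel₀ _ hε.ne', ← rpow_add hx]; simp [ε]
  have hsqrt : √((n : ℝ) ^ (2 * r)) = (n : ℝ) ^ r := by
    rw [sqrt_eq_rpow, ← rpow_mul hx.le]; ring_nf
  rw [norm_of_nonneg (by positivity), norm_of_nonneg (sqrt_nonneg _), ← div_eq_inv_mul,
    le_div_iff₀' (sqrt_pos.2 hε)]
  calc √ε * (n : ℝ) ^ r = √(ε * (n : ℝ) ^ (2 * r)) := by rw [sqrt_mul hε.le, hsqrt]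
    _ ≤ √(n / log n) := sqrt_le_sqrt key

lemma sqrt_mul_self_eq_rpow {x : ℝ} (hx : 0 ≤ x) : √x * x = x ^ (3 / 2 : ℝ) := by
  rw [sqrt_eq_rpow, ← rpow_add_one' hx (by norm_num)]; norm_num

noncomputable def powSum (p : ℝ) (l : ℕ) : ℝ := ∑ d ∈ Icc 1 l, (d : ℝ) ^ p

lemma one_le_powSum (p : ℝ) {l : ℕ} (hl : 1 ≤ l) : 1 ≤ powSum p l := by
  unfold powSum
  simpa using single_le_sum (fun d _ => by positivity) (left_mem_Icc.2 hl)
    (f := fun d : ℕ => (d : ℝ) ^ p)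

lemma powSum_le_powSum {p q : ℝ} (hpq : p ≤ q) (l : ℕ) : powSum p l ≤ powSum q l :=
  sum_le_sum fun d hd => rpow_le_rpow_of_exponent_le (by exact_mod_cast (mem_Icc.1 hd).1) hpq

lemma powSum_eq_sum_range (p : ℝ) (l : ℕ) :
    powSum p l = ∑ i ∈ range l, ((i + 1 : ℕ) : ℝ) ^ p := by
  rw [powSum, range_eq_Ico, sum_Ico_add' (fun i : ℕ => (i : ℝ) ^ p) 0 l 1,
    Ico_add_one_right_eq_Icc, zero_add]

lemma powSum_neg_one (l : ℕ) : powSum (-1) l = harmonic l := by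
  simp [powSum, harmonic_eq_sum_Icc, rpow_neg_one]

lemma powSum_le_tsum {p : ℝ} (hp : p < -1) (l : ℕ) : powSum p l ≤ ∑' d : ℕ, (d : ℝ) ^ p :=
  (Real.summable_nat_rpow.2 hp).sum_le_tsum _ fun _ _ => by positivity

lemma powSum_le_mul_rpow {p : ℝ} (hp : 0 ≤ p) (l : ℕ) : powSum p l ≤ l * (l : ℝ) ^ p :=
  calc powSum p l ≤ ∑ _d ∈ Icc 1 l, (l : ℝ) ^ p :=
        sum_le_sum fun d hd => rpow_le_rpow (by positivity) (by exact_mod_cast (mem_Icc.1 hd).2) hp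
    _ = l * (l : ℝ) ^ p := by simp

lemma mul_rpow_le_powSum {p : ℝ} (hp : p ≤ 0) (l : ℕ) : l * (l : ℝ) ^ p ≤ powSum p l :=
  calc l * (l : ℝ) ^ p = ∑ _d ∈ Icc 1 l, (l : ℝ) ^ p := by simp
    _ ≤ powSum p l := sum_le_sum fun d hd =>
        rpow_le_rpow_of_nonpos (by exact_mod_cast (mem_Icc.1 hd).1)
          (by exact_mod_cast (mem_Icc.1 hd).2) hp

lemma rpow_div_le_powSum {p : ℝ} (hp : 0 ≤ p) (l : ℕ) :
    (l : ℝ) ^ (p + 1) / (p + 1) ≤ powSum p l := by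
  have hmono : MonotoneOn (fun x : ℝ => x ^ p) (Set.Icc 0 (0 + l)) :=
    (monotoneOn_rpow_Ici_of_exponent_nonneg hp).mono fun x hx => hx.1
  have h := hmono.integral_le_sum
  rw [integral_rpow (Or.inl (by linarith)), zero_rpow (by linarith)] at h
  simpa [powSum_eq_sum_range] using h

lemma powSum_le_one_add {p : ℝ} (hp : -1 < p) (hp0 : p ≤ 0) (l : ℕ) :
    powSum p l ≤ 1 + (l : ℝ) ^ (p + 1) / (p + 1) := by
  rcases Nat.eq_zero_or_pos l with rfl | hl
  · simp [powSum, zero_rpow (by linarith : p + 1 ≠ 0)]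
  have hanti : AntitoneOn (fun x : ℝ => x ^ p) (Set.Icc (1 : ℕ) l) :=
    (antitoneOn_rpow_Ioi_of_exponent_nonpos hp0).mono fun x hx => by
      simp only [Set.mem_Icc, Nat.cast_one] at hx; exact zero_lt_one.trans_le hx.1
  have hsum := hanti.sum_le_integral_Ico hl
  rw [integral_rpow (Or.inl hp), Nat.cast_one, one_rpow, sub_div] at hsum
  rw [powSum_eq_sum_range, sum_range_eq_add_Ico _ hl]
  have : 0 < p + 1 := by linarith
  have : 0 ≤ 1 / (p + 1) := by positivity
  simp only [zero_add, Nat.cast_one, one_rpow] at hsum ⊢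
  linarith

lemma powSum_isTheta_rpow {p : ℝ} (hp : -1 < p) :
    powSum p =Θ[𝓟 (Set.Ici 1)] fun l => (l : ℝ) ^ (p + 1) := by
  have hpow (l : ℕ) (hl : 1 ≤ l) : (l : ℝ) ^ (p + 1) = l * (l : ℝ) ^ p := by
    rw [rpow_add_one (by positivity), mul_comm]
  have hp1 : 0 < p + 1 := by linarith
  rcases le_total 0 p with hp0 | hp0
  · refine isTheta_of_bounds (c := (p + 1)⁻¹) (C := 1) (by positivity)
      (.of_forall fun _ => by positivity) (eventually_principal.2 fun l hl => ⟨?_, ?_⟩)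
    · rw [← div_eq_inv_mul]; exact rpow_div_le_powSum hp0 l
    · rw [one_mul, hpow l hl]; exact powSum_le_mul_rpow hp0 l
  · refine isTheta_of_bounds (c := 1) (C := 1 + (p + 1)⁻¹) one_pos
      (.of_forall fun _ => by positivity) (eventually_principal.2 fun l hl => ⟨?_, ?_⟩)
    · rw [one_mul, hpow l hl]; exact mul_rpow_le_powSum hp0 l
    · have : 1 ≤ (l : ℝ) ^ (p + 1) := one_le_rpow (by exact_mod_cast hl) hp1.le
      have := powSum_le_one_add hp hp0 l
      rw [add_mul, one_mul, ← div_eq_inv_mul]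
      linarith

lemma powSum_isTheta_one {p : ℝ} (hp : p < -1) :
    powSum p =Θ[𝓟 (Set.Ici 1)] fun _ => (1 : ℝ) :=
  isTheta_of_bounds (C := ∑' d : ℕ, (d : ℝ) ^ p) one_pos (.of_forall fun _ => zero_le_one)
    (eventually_principal.2 fun l hl => by
      simpa using ⟨one_le_powSum p hl, powSum_le_tsum hp l⟩)

lemma powSum_sub_one_isTheta_rpow {p : ℝ} (hp : -1 < p) :
    (fun n : ℕ => powSum p (n - 1)) =Θ[atTop] fun n => (n : ℝ) ^ (p + 1) :=
  (powSum_isTheta_rpow hp).comp_sub_one.trans <| natCast_sub_one_isTheta.rpow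
    (.of_forall fun _ => by positivity) (.of_forall fun _ => by positivity)

lemma powSum_sub_one_isTheta_one {p : ℝ} (hp : p < -1) :
    (fun n : ℕ => powSum p (n - 1)) =Θ[atTop] fun _ => (1 : ℝ) :=
  (powSum_isTheta_one hp).comp_sub_one

lemma powSum_neg_one_sub_one_isTheta_log :
    (fun n : ℕ => powSum (-1) (n - 1)) =Θ[atTop] fun n => log n :=
  isTheta_of_bounds (c := 1) (C := 2) one_pos (.of_forall fun _ => log_natCast_nonneg _)
    ((eventually_ge_atTop 3).mono fun n hn => by
      have hlow := log_add_one_le_harmonic (n - 1)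
      have hupp := harmonic_le_one_add_log (n - 1)
      have hlog : log ((n - 1 : ℕ) : ℝ) ≤ log n :=
        log_le_log (by norm_cast; omega) (by exact_mod_cast Nat.sub_le n 1)
      rw [Nat.sub_add_cancel (by omega)] at hlow
      have := one_le_log_natCast hn
      rw [powSum_neg_one]; constructor <;> linarith)

lemma inv_powSum_mul_powSum_isTheta {φ q : ℝ} (hφ : 1 < φ) (hq : -1 < q) :
    (fun l => (powSum (-φ) l)⁻¹ * powSum q l) =Θ[𝓟 (Set.Ici 1)] fun l => (l : ℝ) ^ (q + 1) := by
  simpa using (powSum_isTheta_one (by linarith : -φ < -1)).inv.mul (powSum_isTheta_rpow hq)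

lemma D1_isTheta {φ : ℝ} (hφ₁ : 1 < φ) (hφ₂ : φ < 2) :
    D1 φ =Θ[𝓟 (Set.Ici 1)] fun l => (l : ℝ) ^ (2 - φ) := by
  have h := inv_powSum_mul_powSum_isTheta hφ₁ (q := 1 - φ) (by linarith)
  rwa [show 1 - φ + 1 = 2 - φ by ring] at h

lemma Dhalf_isTheta {φ : ℝ} (hφ₁ : 1 < φ) (hφ₂ : φ < 3 / 2) :
    Dhalf φ =Θ[𝓟 (Set.Ici 1)] fun l => (l : ℝ) ^ (3 / 2 - φ) := by
  have h := inv_powSum_mul_powSum_isTheta hφ₁ (q := 1 / 2 - φ) (by linarith)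
  rwa [show 1 / 2 - φ + 1 = 3 / 2 - φ by ring] at h

lemma zipf_average_isTheta {γ e : ℝ} {D : ℕ → ℝ} (hD0 : ∀ l, 0 ≤ D l)
    (hD : D =Θ[𝓟 (Set.Ici 1)] fun l => (l : ℝ) ^ e) :
    (fun n : ℕ => n * (Z γ n)⁻¹ * ∑ l ∈ Icc 1 (n - 1), (l : ℝ) ^ (-γ) * D l) =Θ[atTop]
      fun n => n * powSum (e - γ) (n - 1) / powSum (-γ) (n - 1) := by
  have hterm : (fun l : ℕ => (l : ℝ) ^ (-γ) * D l) =Θ[𝓟 (Set.Ici 1)]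
      fun l => (l : ℝ) ^ (e - γ) :=
    (isTheta_rfl.mul hD).trans_eventuallyEq <| eventually_principal.2 fun l (hl : 1 ≤ l) => by
      dsimp only; rw [← rpow_add (by exact_mod_cast hl), neg_add_eq_sub]
  have hsum := ((isTheta_sum_Icc (fun l => mul_nonneg (by positivity) (hD0 l))
    (fun _ => by positivity) hterm).mono le_top).comp_sub_one
  calc _ =ᶠ[atTop] (fun n : ℕ => n * (∑ l ∈ Icc 1 (n - 1), (l : ℝ) ^ (-γ) * D l) / Z γ n) :=
        .of_forall fun n => by simp only [div_eq_mul_inv]; ring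
    _ =Θ[atTop] _ := (isTheta_rfl.mul hsum).div isTheta_rfl

lemma W_isTheta {γ φ : ℝ} (hφ₁ : 1 < φ) (hφ₂ : φ < 2) :
    W γ φ =Θ[atTop] fun n => n * powSum (2 - φ - γ) (n - 1) / powSum (-γ) (n - 1) :=
  zipf_average_isTheta (fun _ => by unfold D1 Zphi; positivity) (D1_isTheta hφ₁ hφ₂)

lemma M_isTheta {γ φ : ℝ} (hφ₁ : 1 < φ) (hφ₂ : φ < 3 / 2) :
    M γ φ =Θ[atTop] fun n => n * powSum (3 / 2 - φ - γ) (n - 1) / powSum (-γ) (n - 1) :=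
  zipf_average_isTheta (fun _ => by unfold Dhalf Zphi; positivity) (Dhalf_isTheta hφ₁ hφ₂)

lemma W_nonneg (γ φ : ℝ) (n : ℕ) : 0 ≤ W γ φ n := by
  unfold W D1 Zphi Z; positivity

lemma M_nonneg (γ φ : ℝ) (n : ℕ) : 0 ≤ M γ φ n := by
  unfold M Dhalf Zphi Z; positivity

lemma g_nonneg (β : ℝ) (n : ℕ) : 0 ≤ g β n := by
  unfold g; split_ifs <;> positivity

lemma G_nonneg (β γ φ : ℝ) (n : ℕ) : 0 ≤ G β γ φ n :=
  add_nonneg (mul_nonneg (g_nonneg β n) (M_nonneg γ φ n)) (W_nonneg γ φ n)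

lemma g_one (n : ℕ) : g 1 n = √(n / log n) := by
  norm_num [g]

lemma g_of_lt_one {β : ℝ} (hβ : β < 1) (n : ℕ) : g β n = √n := by
  rw [g, if_neg (by linarith), if_neg (by linarith), if_neg (by linarith), if_neg hβ.ne]

lemma g_mem_Icc {β : ℝ} (hβ : β ≤ 1) :
    ∀ᶠ n : ℕ in atTop, √(n / log n) ≤ g β n ∧ g β n ≤ √n :=
  (eventually_ge_atTop 3).mono fun n hn => by
    rcases hβ.eq_or_lt with rfl | hβ
    · rw [g_one]; exact ⟨le_rfl, sqrt_div_log_le_sqrt hn⟩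
    · rw [g_of_lt_one hβ]; exact ⟨sqrt_div_log_le_sqrt hn, le_rfl⟩

lemma g_one_mul_self (n : ℕ) : g 1 n * n = (n : ℝ) ^ (3 / 2 : ℝ) / √(log n) := by
  rw [g_one, sqrt_div' _ (log_natCast_nonneg n), div_mul_eq_mul_div,
    sqrt_mul_self_eq_rpow n.cast_nonneg]

lemma g_one_mul_self_mul_log (n : ℕ) :
    g 1 n * (n * log n) = (n : ℝ) ^ (3 / 2 : ℝ) * √(log n) :=
  calc g 1 n * (n * log n) = (√n * n) * (log n / √(log n)) := by
        rw [g_one, sqrt_div' _ (log_natCast_nonneg n)]; ring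
    _ = _ := by rw [div_sqrt, sqrt_mul_self_eq_rpow n.cast_nonneg]

lemma g_mul_self_of_lt_one {β : ℝ} (hβ : β < 1) (n : ℕ) :
    g β n * n = (n : ℝ) ^ (3 / 2 : ℝ) := by
  rw [g_of_lt_one hβ, sqrt_mul_self_eq_rpow n.cast_nonneg]

lemma g_mul_self_mul_log_of_lt_one {β : ℝ} (hβ : β < 1) (n : ℕ) :
    g β n * (n * log n) = (n : ℝ) ^ (3 / 2 : ℝ) * log n := by
  rw [g_of_lt_one hβ, ← mul_assoc, sqrt_mul_self_eq_rpow n.cast_nonneg]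

lemma W_isTheta_of_lt_one {γ φ : ℝ} (hφ₁ : 1 < φ) (hφ₂ : φ < 2) (hγ : γ < 1) :
    W γ φ =Θ[atTop] fun n => (n : ℝ) ^ (3 - φ) :=
  calc W γ φ =Θ[atTop] _ := W_isTheta hφ₁ hφ₂
    _ =Θ[atTop] fun n => n * (n : ℝ) ^ (2 - φ - γ + 1) / (n : ℝ) ^ (-γ + 1) :=
      (isTheta_rfl.mul (powSum_sub_one_isTheta_rpow (by linarith))).div
        (powSum_sub_one_isTheta_rpow (by linarith))
    _ =ᶠ[atTop] _ := (eventually_gt_atTop 0).mono fun n (hn : 0 < n) => by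
      dsimp only
      rw [← rpow_one_add' (by positivity) (by linarith), ← rpow_sub (by exact_mod_cast hn)]
      ring_nf

lemma W_one_isTheta {φ : ℝ} (hφ₁ : 1 < φ) (hφ₂ : φ < 2) :
    W 1 φ =Θ[atTop] fun n => (n : ℝ) ^ (3 - φ) / log n :=
  calc W 1 φ =Θ[atTop] _ := W_isTheta hφ₁ hφ₂
    _ =Θ[atTop] fun n => n * (n : ℝ) ^ (2 - φ - 1 + 1) / log n :=
      (isTheta_rfl.mul (powSum_sub_one_isTheta_rpow (by linarith))).div
        powSum_neg_one_sub_one_isTheta_log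
    _ =ᶠ[atTop] _ := .of_forall fun n => by
      dsimp only; rw [← rpow_one_add' (by positivity) (by linarith)]; ring_nf

lemma W_isTheta_of_one_lt {γ φ : ℝ} (hφ : 1 < φ) (hγ₁ : 1 < γ) (hγ₂ : γ < 3 - φ) :
    W γ φ =Θ[atTop] fun n => (n : ℝ) ^ (4 - γ - φ) :=
  calc W γ φ =Θ[atTop] _ := W_isTheta hφ (by linarith)
    _ =Θ[atTop] fun n => n * (n : ℝ) ^ (2 - φ - γ + 1) / 1 :=
      (isTheta_rfl.mul (powSum_sub_one_isTheta_rpow (by linarith))).div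
        (powSum_sub_one_isTheta_one (by linarith))
    _ =ᶠ[atTop] _ := .of_forall fun n => by
      dsimp only; rw [div_one, ← rpow_one_add' (by positivity) (by linarith)]; ring_nf

lemma sqrt_mul_M_isTheta_W {γ φ : ℝ} (hφ₁ : 1 < φ) (hφ₂ : φ < 3 / 2) (hγ : γ < 5 / 2 - φ) :
    (fun n : ℕ => √n * M γ φ n) =Θ[atTop] W γ φ := by
  have hsqrt : (fun n : ℕ => √n * powSum (3 / 2 - φ - γ) (n - 1)) =Θ[atTop]
      fun n => powSum (2 - φ - γ) (n - 1) :=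
    calc _ =Θ[atTop] fun n : ℕ => √n * (n : ℝ) ^ (3 / 2 - φ - γ + 1) :=
          isTheta_rfl.mul (powSum_sub_one_isTheta_rpow (by linarith))
      _ =ᶠ[atTop] fun n : ℕ => (n : ℝ) ^ (2 - φ - γ + 1) := .of_forall fun n => by
          dsimp only; rw [sqrt_eq_rpow, ← rpow_add' (by positivity) (by linarith)]; ring_nf
      _ =Θ[atTop] _ := (powSum_sub_one_isTheta_rpow (by linarith)).symm
  calc (fun n : ℕ => √n * M γ φ n)
      _ =Θ[atTop] fun n : ℕ => √n * (n * powSum (3 / 2 - φ - γ) (n - 1) / powSum (-γ) (n - 1)) :=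
        isTheta_rfl.mul (M_isTheta hφ₁ hφ₂)
      _ =ᶠ[atTop] fun n : ℕ => n * (√n * powSum (3 / 2 - φ - γ) (n - 1)) / powSum (-γ) (n - 1) :=
        .of_forall fun n => by ring
      _ =Θ[atTop] _ := (isTheta_rfl.mul hsqrt).div isTheta_rfl
      _ =Θ[atTop] W γ φ := (W_isTheta hφ₁ (by linarith)).symm

lemma G_isTheta_W_of_lt_critical {β γ φ : ℝ} (hφ₁ : 1 < φ) (hφ₂ : φ < 3 / 2) (hβ : β ≤ 1)
    (hγ : γ < 5 / 2 - φ) : (fun n => G β γ φ n) =Θ[atTop] W γ φ := by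
  have hgM : (fun n => g β n * M γ φ n) =O[atTop] fun n : ℕ => √n * M γ φ n :=
    .of_bound 1 <| (g_mem_Icc hβ).mono fun n hn => by
      rw [one_mul, norm_mul, norm_mul, norm_of_nonneg (g_nonneg β n),
        norm_of_nonneg (sqrt_nonneg _)]
      exact mul_le_mul_of_nonneg_right hn.2 (norm_nonneg _)
  calc (fun n => G β γ φ n) =ᶠ[atTop] fun n => W γ φ n + g β n * M γ φ n :=
        .of_forall fun n => add_comm _ _
    _ =Θ[atTop] W γ φ := isTheta_add_of_isBigO (.of_forall (W_nonneg γ φ))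
        (.of_forall fun n => mul_nonneg (g_nonneg β n) (M_nonneg γ φ n))
        (hgM.trans (sqrt_mul_M_isTheta_W hφ₁ hφ₂ hγ).isBigO)

lemma M_isTheta_of_critical_lt {γ φ : ℝ} (hφ₁ : 1 < φ) (hφ₂ : φ < 3 / 2)
    (hγ : 5 / 2 - φ < γ) : M γ φ =Θ[atTop] fun n => (n : ℝ) :=
  calc M γ φ =Θ[atTop] _ := M_isTheta hφ₁ hφ₂
    _ =Θ[atTop] fun n => (n : ℝ) * 1 / 1 :=
      (isTheta_rfl.mul (powSum_sub_one_isTheta_one (by linarith))).div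
        (powSum_sub_one_isTheta_one (by linarith))
    _ =ᶠ[atTop] _ := .of_forall fun n => by simp

lemma M_isTheta_of_eq_critical {γ φ : ℝ} (hφ₁ : 1 < φ) (hφ₂ : φ < 3 / 2)
    (hγ : γ = 5 / 2 - φ) : M γ φ =Θ[atTop] fun n => (n : ℝ) * log n := by
  have h := M_isTheta (γ := γ) hφ₁ hφ₂
  rw [show 3 / 2 - φ - γ = -1 by rw [hγ]; ring] at h
  calc M γ φ =Θ[atTop] _ := h
    _ =Θ[atTop] fun n => (n : ℝ) * log n / 1 :=
      (isTheta_rfl.mul powSum_neg_one_sub_one_isTheta_log).div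
        (powSum_sub_one_isTheta_one (by linarith))
    _ =ᶠ[atTop] _ := .of_forall fun n => div_one _

lemma W_isTheta_of_eq_critical {γ φ : ℝ} (hφ₁ : 1 < φ) (hφ₂ : φ < 3 / 2)
    (hγ : γ = 5 / 2 - φ) : W γ φ =Θ[atTop] fun n => (n : ℝ) ^ (3 / 2 : ℝ) := by
  have h := W_isTheta (γ := γ) hφ₁ (by linarith)
  rw [show 2 - φ - γ = -1 / 2 by rw [hγ]; ring] at h
  calc W γ φ =Θ[atTop] _ := h
    _ =Θ[atTop] fun n => (n : ℝ) * (n : ℝ) ^ (-1 / 2 + 1 : ℝ) / 1 :=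
      (isTheta_rfl.mul (powSum_sub_one_isTheta_rpow (by norm_num))).div
        (powSum_sub_one_isTheta_one (by linarith))
    _ =ᶠ[atTop] _ := .of_forall fun n => by
      dsimp only; rw [div_one, ← rpow_one_add' (by positivity) (by norm_num)]
      norm_num

lemma W_isBigO_of_critical_lt {γ φ : ℝ} (hφ₁ : 1 < φ) (hφ₂ : φ < 3 / 2)
    (hγ : 5 / 2 - φ < γ) : W γ φ =O[atTop] fun n => √(n / log n) * n := by
  -- `2 - φ - γ < -1/2` may be `≤ -1`; raising it to `q ∈ (-1, -1/2)` keeps the sum polynomial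
  set q := max (2 - φ - γ) (-3 / 4)
  have hq₁ : -1 < q := lt_max_of_lt_right (by norm_num)
  have hq₂ : q < -1 / 2 := max_lt (by linarith) (by norm_num)
  calc W γ φ =Θ[atTop] _ := W_isTheta hφ₁ (by linarith)
    _ =Θ[atTop] fun n => n * powSum (2 - φ - γ) (n - 1) / 1 :=
      isTheta_rfl.div (powSum_sub_one_isTheta_one (by linarith))
    _ =O[atTop] fun n => n * powSum q (n - 1) := .of_bound 1 <| .of_forall fun n => by
      rw [div_one, one_mul, norm_of_nonneg (by unfold powSum; positivity),
        norm_of_nonneg (by unfold powSum; positivity)]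
      exact mul_le_mul_of_nonneg_left (powSum_le_powSum (le_max_left _ _) _) (by positivity)
    _ =O[atTop] fun n => n * (n : ℝ) ^ (q + 1) :=
      (isBigO_refl _ _).mul (powSum_sub_one_isTheta_rpow hq₁).isBigO
    _ =O[atTop] fun n => n * √(n / log n) :=
      (isBigO_refl _ _).mul (rpow_isBigO_sqrt_div_log (by linarith))
    _ =ᶠ[atTop] _ := .of_forall fun n => mul_comm _ _

lemma G_isTheta_of_critical_lt {β γ φ : ℝ} (hφ₁ : 1 < φ) (hφ₂ : φ < 3 / 2) (hβ : β ≤ 1)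
    (hγ : 5 / 2 - φ < γ) : (fun n => G β γ φ n) =Θ[atTop] fun n => g β n * n := by
  have hgM := (isTheta_rfl (f := g β)).mul (M_isTheta_of_critical_lt hφ₁ hφ₂ hγ)
  have hW : W γ φ =O[atTop] fun n => g β n * n :=
    (W_isBigO_of_critical_lt hφ₁ hφ₂ hγ).trans <| .of_bound 1 <| (g_mem_Icc hβ).mono fun n hn => by
      rw [one_mul, norm_mul, norm_mul, norm_of_nonneg (g_nonneg β n),
        norm_of_nonneg (sqrt_nonneg _)]
      exact mul_le_mul_of_nonneg_right hn.1 (norm_nonneg _)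
  exact (isTheta_add_of_isBigO (.of_forall fun n => mul_nonneg (g_nonneg β n) (M_nonneg γ φ n))
    (.of_forall (W_nonneg γ φ)) (hW.trans hgM.symm.isBigO)).trans hgM

lemma G_isTheta_of_eq_critical {β γ φ : ℝ} (hφ₁ : 1 < φ) (hφ₂ : φ < 3 / 2) (hβ : β ≤ 1)
    (hγ : γ = 5 / 2 - φ) : (fun n => G β γ φ n) =Θ[atTop] fun n => g β n * (n * log n) := by
  have hgM := (isTheta_rfl (f := g β)).mul (M_isTheta_of_eq_critical hφ₁ hφ₂ hγ)
  have hW : W γ φ =O[atTop] fun n => g β n * (n * log n) :=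
    (W_isTheta_of_eq_critical hφ₁ hφ₂ hγ).isBigO.trans <| .of_bound 1 <| by
      filter_upwards [g_mem_Icc hβ, eventually_ge_atTop 3] with n hg hn
      rw [one_mul, norm_of_nonneg (by positivity),
        norm_of_nonneg (mul_nonneg (g_nonneg β n) (by positivity)),
        ← sqrt_mul_self_eq_rpow n.cast_nonneg, ← mul_assoc, mul_right_comm]
      exact mul_le_mul_of_nonneg_right ((sqrt_le_sqrt_div_log_mul_log hn).trans
        (mul_le_mul_of_nonneg_right hg.1 (log_natCast_nonneg n))) n.cast_nonneg
  exact (isTheta_add_of_isBigO (.of_forall fun n => mul_nonneg (g_nonneg β n) (M_nonneg γ φ n))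
    (.of_forall (W_nonneg γ φ)) (hW.trans hgM.symm.isBigO)).trans hgM

lemma isBigTheta_G {β γ φ : ℝ} {h : ℕ → ℝ} (hG : (fun n => G β γ φ n) =Θ[atTop] h)
    (hh : ∀ n, 0 ≤ h n := by intro n; positivity) : IsBigTheta (fun n => G β γ φ n) h :=
  isBigTheta_of_isTheta (G_nonneg β γ φ) hh hG

theorem social_multicast_order_phi_mid_beta_le_one_general (γ β φ : ℝ)
    (hφ₁ : 1 < φ) (hφ₂ : φ < 3 / 2) :
    (β = 1 →
      (5 / 2 - φ < γ → IsBigTheta (fun n => G β γ φ n)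
        (fun n => (n : ℝ) ^ (3 / 2 : ℝ) / Real.sqrt (Real.log n))) ∧
      (γ = 5 / 2 - φ → IsBigTheta (fun n => G β γ φ n)
        (fun n => (n : ℝ) ^ (3 / 2 : ℝ) * Real.sqrt (Real.log n))) ∧
      (1 < γ ∧ γ < 5 / 2 - φ →
        IsBigTheta (fun n => G β γ φ n) (fun n => (n : ℝ) ^ (4 - γ - φ))) ∧
      (γ = 1 → IsBigTheta (fun n => G β γ φ n)
        (fun n => (n : ℝ) ^ (3 - φ) / Real.log n)) ∧
      (γ < 1 → IsBigTheta (fun n => G β γ φ n) (fun n => (n : ℝ) ^ (3 - φ)))) ∧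
    (β < 1 →
      (5 / 2 - φ < γ → IsBigTheta (fun n => G β γ φ n)
        (fun n => (n : ℝ) ^ (3 / 2 : ℝ))) ∧
      (γ = 5 / 2 - φ → IsBigTheta (fun n => G β γ φ n)
        (fun n => (n : ℝ) ^ (3 / 2 : ℝ) * Real.log n)) ∧
      (1 < γ ∧ γ < 5 / 2 - φ →
        IsBigTheta (fun n => G β γ φ n) (fun n => (n : ℝ) ^ (4 - γ - φ))) ∧
      (γ = 1 → IsBigTheta (fun n => G β γ φ n)
        (fun n => (n : ℝ) ^ (3 - φ) / Real.log n)) ∧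
      (γ < 1 → IsBigTheta (fun n => G β γ φ n) (fun n => (n : ℝ) ^ (3 - φ)))) := by
  have below_critical (hβ : β ≤ 1) : _ ∧ _ ∧ _ :=
    ⟨fun hγ : 1 < γ ∧ γ < 5 / 2 - φ => isBigTheta_G <|
        (G_isTheta_W_of_lt_critical hφ₁ hφ₂ hβ hγ.2).trans
          (W_isTheta_of_one_lt hφ₁ hγ.1 (by linarith)),
      fun hγ : γ = 1 => isBigTheta_G <|
        (G_isTheta_W_of_lt_critical hφ₁ hφ₂ hβ (by linarith)).trans
          (hγ ▸ W_one_isTheta hφ₁ (by linarith)),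
      fun hγ : γ < 1 => isBigTheta_G <|
        (G_isTheta_W_of_lt_critical hφ₁ hφ₂ hβ (by linarith)).trans
          (W_isTheta_of_lt_one hφ₁ (by linarith) hγ)⟩
  constructor
  · rintro rfl
    exact ⟨fun hγ => isBigTheta_G <| (G_isTheta_of_critical_lt hφ₁ hφ₂ le_rfl hγ).trans_eventuallyEq
        (.of_forall g_one_mul_self),
      fun hγ => isBigTheta_G <| (G_isTheta_of_eq_critical hφ₁ hφ₂ le_rfl hγ).trans_eventuallyEq
        (.of_forall g_one_mul_self_mul_log),
      below_critical le_rfl⟩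
  · intro hβ
    exact ⟨fun hγ => isBigTheta_G <| (G_isTheta_of_critical_lt hφ₁ hφ₂ hβ.le hγ).trans_eventuallyEq
        (.of_forall (g_mul_self_of_lt_one hβ)),
      fun hγ => isBigTheta_G <| (G_isTheta_of_eq_critical hφ₁ hφ₂ hβ.le hγ).trans_eventuallyEq
        (.of_forall (g_mul_self_mul_log_of_lt_one hβ)),
      below_critical hβ.le⟩

theorem social_multicast_order_phi_mid_beta_le_one (γ β φ : ℝ) (hγ : 0 ≤ γ) (hβ : 0 ≤ β)
    (hφ₁ : 1 < φ) (hφ₂ : φ < 3 / 2) :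
    (β = 1 →
      (5 / 2 - φ < γ → IsBigTheta (fun n => G β γ φ n)
        (fun n => (n : ℝ) ^ (3 / 2 : ℝ) / Real.sqrt (Real.log n))) ∧
      (γ = 5 / 2 - φ → IsBigTheta (fun n => G β γ φ n)
        (fun n => (n : ℝ) ^ (3 / 2 : ℝ) * Real.sqrt (Real.log n))) ∧
      (1 < γ ∧ γ < 5 / 2 - φ →
        IsBigTheta (fun n => G β γ φ n) (fun n => (n : ℝ) ^ (4 - γ - φ))) ∧
      (γ = 1 → IsBigTheta (fun n => G β γ φ n)
        (fun n => (n : ℝ) ^ (3 - φ) / Real.log n)) ∧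
      (γ < 1 → IsBigTheta (fun n => G β γ φ n) (fun n => (n : ℝ) ^ (3 - φ)))) ∧
    (β < 1 →
      (5 / 2 - φ < γ → IsBigTheta (fun n => G β γ φ n)
        (fun n => (n : ℝ) ^ (3 / 2 : ℝ))) ∧
      (γ = 5 / 2 - φ → IsBigTheta (fun n => G β γ φ n)
        (fun n => (n : ℝ) ^ (3 / 2 : ℝ) * Real.log n)) ∧
      (1 < γ ∧ γ < 5 / 2 - φ →
        IsBigTheta (fun n => G β γ φ n) (fun n => (n : ℝ) ^ (4 - γ - φ))) ∧
      (γ = 1 → IsBigTheta (fun n => G β γ φ n)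
        (fun n => (n : ℝ) ^ (3 - φ) / Real.log n)) ∧
      (γ < 1 → IsBigTheta (fun n => G β γ φ n) (fun n => (n : ℝ) ^ (3 - φ)))) :=
  social_multicast_order_phi_mid_beta_le_one_general γ β φ hφ₁ hφ₂
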